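/- arXiv:1504.02870 — 2 statements merged into one kernel-verified Lean document; each statement's English description precedes it below -/
import Mathlib

section
/- Let β* minimize F(β) = (1/n) Σ_{i∈D} ℓ_i(β) + (λ/2)‖β‖² over ℝ^d, and let β₀ ∈ ℝ^d. Define c = (1/2)(β₀ − λ⁻¹ g₀) and ρ = (1/2)‖β₀ + λ⁻¹ g₀‖, where g₀ = (1/n) Σ_{i∈D} ∇ℓ_i(β₀). Then ‖β* − c‖ ≤ ρ. -/
/-!
Write `L` for the averaged loss. Optimality of `β*` gives `∇L(β*) = -λ β*`, and `∇L` is monotone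
because `L` is convex, so `0 ≤ ⟪∇L(β*) - g₀, β* - β₀⟫ = -λ ⟪β* - β₀, β* + λ⁻¹ g₀⟫`. Hence `β*`
sees the segment from `β₀` to `-λ⁻¹ g₀` under an angle of at least `π / 2`, i.e. it lies in the
ball with that segment as a diameter (Thales), whose centre is `c` and radius is `ρ`.
-/

open InnerProductSpace Set

section

variable {E : Type*} [NormedAddCommGroup E] [InnerProductSpace ℝ E]

theorem ConvexOn.finset_sum {ι : Type*} {s : Set E} {t : Finset ι} {f : ι → E → ℝ}
    (hs : Convex ℝ s) (h : ∀ i ∈ t, ConvexOn ℝ s (f i)) :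
    ConvexOn ℝ s (fun x => ∑ i ∈ t, f i x) := by
  induction t using Finset.cons_induction with
  | empty => simpa using convexOn_const (0 : ℝ) hs
  | cons i t hi ih =>
    simp only [Finset.sum_cons]
    exact (h i (Finset.mem_cons_self i t)).add (ih fun j hj => h j (Finset.mem_cons_of_mem hj))

theorem norm_sub_midpoint_le_of_inner_nonpos {x p q : E} (h : ⟪x - p, x - q⟫_ℝ ≤ 0) :
    ‖x - (1 / 2 : ℝ) • (p + q)‖ ≤ 1 / 2 * ‖p - q‖ := by
  have hmid : x - (1 / 2 : ℝ) • (p + q) = (1 / 2 : ℝ) • ((x - p) + (x - q)) := by module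
  have hdiff : p - q = (x - q) - (x - p) := by abel
  rw [hmid, hdiff, norm_smul, Real.norm_of_nonneg (by norm_num)]
  gcongr
  generalize x - p = u at h ⊢
  generalize x - q = v at h ⊢
  rw [← sq_le_sq₀ (norm_nonneg _) (norm_nonneg _), norm_add_sq_real, norm_sub_sq_real]
  linarith [real_inner_comm u v]

variable [CompleteSpace E]

theorem HasGradientAt.add {f g : E → ℝ} {f' g' x : E} (hf : HasGradientAt f f' x)
    (hg : HasGradientAt g g' x) : HasGradientAt (fun y => f y + g y) (f' + g') x := by
  rw [hasGradientAt_iff_hasFDerivAt, map_add]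
  exact hf.hasFDerivAt.add hg.hasFDerivAt

theorem HasGradientAt.const_mul {f : E → ℝ} {f' x : E} (hf : HasGradientAt f f' x) (c : ℝ) :
    HasGradientAt (fun y => c * f y) (c • f') x := by
  rw [hasGradientAt_iff_hasFDerivAt, map_smul]
  exact hf.hasFDerivAt.const_mul c

theorem HasGradientAt.fun_sum {ι : Type*} {u : Finset ι} {A : ι → E → ℝ} {A' : ι → E} {x : E}
    (h : ∀ i ∈ u, HasGradientAt (A i) (A' i) x) :
    HasGradientAt (fun y => ∑ i ∈ u, A i y) (∑ i ∈ u, A' i) x := by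
  rw [hasGradientAt_iff_hasFDerivAt, map_sum]
  exact HasFDerivAt.fun_sum fun i hi => (h i hi).hasFDerivAt

theorem hasGradientAt_norm_sq (x : E) : HasGradientAt (fun y => ‖y‖ ^ 2) ((2 : ℝ) • x) x := by
  rw [hasGradientAt_iff_hasFDerivAt, map_smul, ofNat_smul_eq_nsmul]
  exact (hasStrictFDerivAt_norm_sq x).hasFDerivAt

theorem IsLocalMin.hasGradientAt_eq_zero {f : E → ℝ} {f' x : E} (h : IsLocalMin f x)
    (hf : HasGradientAt f f' x) : f' = 0 := by
  simpa using h.hasFDerivAt_eq_zero hf.hasFDerivAt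

theorem ConvexOn.inner_sub_le_of_hasGradientAt {f : E → ℝ} {f' x : E}
    (hf : ConvexOn ℝ univ f) (hx : HasGradientAt f f' x) (y : E) :
    ⟪f', y - x⟫_ℝ ≤ f y - f x := by
  have hline : HasDerivAt (AffineMap.lineMap x y) (y - x) (0 : ℝ) := by
    simpa using AffineMap.hasDerivAt_lineMap (a := x) (b := y) (x := (0 : ℝ))
  have hφ : HasDerivAt (f ∘ (AffineMap.lineMap x y : ℝ → E)) ⟪f', y - x⟫_ℝ 0 := by
    have hx' : HasFDerivAt f (toDual ℝ E f') (AffineMap.lineMap x y (0 : ℝ)) := by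
      simpa using hx.hasFDerivAt
    simpa using hx'.comp_hasDerivAt (0 : ℝ) hline
  have hslope := (hf.comp_affineMap (AffineMap.lineMap x y)).le_slope_of_hasDerivAt
    (mem_univ 0) (mem_univ 1) one_pos hφ
  simpa [slope_def_field] using hslope

theorem ConvexOn.inner_sub_nonneg_of_hasGradientAt {f : E → ℝ} {f' g' x y : E}
    (hf : ConvexOn ℝ univ f) (hx : HasGradientAt f f' x) (hy : HasGradientAt f g' y) :
    0 ≤ ⟪f' - g', x - y⟫_ℝ := by
  have hxy := hf.inner_sub_le_of_hasGradientAt hx y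
  have hyx := hf.inner_sub_le_of_hasGradientAt hy x
  rw [← neg_sub x y, inner_neg_right] at hxy
  rw [inner_sub_left]
  linarith

theorem HasGradientAt.eq_neg_smul_of_minimizes_add_norm_sq {L : E → ℝ} {g x : E} {lam : ℝ}
    (hL : HasGradientAt L g x) (hmin : ∀ y, L x + lam / 2 * ‖x‖ ^ 2 ≤ L y + lam / 2 * ‖y‖ ^ 2) :
    g = -(lam • x) := by
  have hloc : IsLocalMin (fun y => L y + lam / 2 * ‖y‖ ^ 2) x :=
    Filter.Eventually.of_forall hmin
  have hzero := hloc.hasGradientAt_eq_zero (hL.add ((hasGradientAt_norm_sq x).const_mul _))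
  rw [smul_smul, div_mul_cancel₀ lam two_ne_zero] at hzero
  exact eq_neg_of_add_eq_zero_left hzero

end

theorem ball_containment_of_minimizer_general
    {d : ℕ} {ι : Type*} (D : Finset ι)
    (ℓ : ι → EuclideanSpace ℝ (Fin d) → ℝ)
    (hdiff : ∀ i ∈ D, Differentiable ℝ (ℓ i))
    (hconv : ∀ i ∈ D, ConvexOn ℝ Set.univ (ℓ i))
    (lam : ℝ) (hlam : 0 < lam)
    (βstar β₀ : EuclideanSpace ℝ (Fin d))
    (hmin : ∀ β, (1 / (D.card : ℝ)) * (∑ i ∈ D, ℓ i βstar) + (lam / 2) * ‖βstar‖ ^ 2 ≤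
                 (1 / (D.card : ℝ)) * (∑ i ∈ D, ℓ i β) + (lam / 2) * ‖β‖ ^ 2)
    (g₀ : EuclideanSpace ℝ (Fin d))
    (hg₀ : g₀ = (1 / (D.card : ℝ)) • (∑ i ∈ D, gradient (ℓ i) β₀)) :
    ‖βstar - (1 / 2 : ℝ) • (β₀ - lam⁻¹ • g₀)‖ ≤ (1 / 2) * ‖β₀ + lam⁻¹ • g₀‖ := by
  set L := fun β => (1 / (D.card : ℝ)) * ∑ i ∈ D, ℓ i β
  have hL_grad (β) : HasGradientAt L ((1 / (D.card : ℝ)) • ∑ i ∈ D, gradient (ℓ i) β) β :=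
    (HasGradientAt.fun_sum fun i hi => (hdiff i hi β).hasGradientAt).const_mul _
  have hL_conv : ConvexOn ℝ univ L :=
    (ConvexOn.finset_sum convex_univ hconv).smul (by positivity)
  have hopt := (hL_grad βstar).eq_neg_smul_of_minimizes_add_norm_sq hmin
  have hmono := hL_conv.inner_sub_nonneg_of_hasGradientAt (hL_grad βstar) (hL_grad β₀)
  have hscale : -(lam • βstar) - g₀ = -lam • (βstar - -(lam⁻¹ • g₀)) := by
    match_scalars <;> field_simp
  rw [hopt, ← hg₀, hscale, real_inner_smul_left, real_inner_comm] at hmono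
  have hinner : ⟪βstar - β₀, βstar - -(lam⁻¹ • g₀)⟫_ℝ ≤ 0 :=
    nonpos_of_mul_nonneg_right hmono (neg_neg_of_pos hlam)
  simpa [sub_eq_add_neg] using norm_sub_midpoint_le_of_inner_nonpos hinner

theorem ball_containment_of_minimizer
    {d : ℕ} {ι : Type*} (D : Finset ι)
    (ℓ : ι → EuclideanSpace ℝ (Fin d) → ℝ)
    (hdiff : ∀ i ∈ D, Differentiable ℝ (ℓ i))
    (hconv : ∀ i ∈ D, ConvexOn ℝ Set.univ (ℓ i))
    (lam : ℝ) (hlam : 0 < lam)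
    (hD : 0 < D.card)
    (βstar β₀ : EuclideanSpace ℝ (Fin d))
    (hmin : ∀ β, (1 / (D.card : ℝ)) * (∑ i ∈ D, ℓ i βstar) + (lam / 2) * ‖βstar‖ ^ 2 ≤
                 (1 / (D.card : ℝ)) * (∑ i ∈ D, ℓ i β) + (lam / 2) * ‖β‖ ^ 2)
    (g₀ : EuclideanSpace ℝ (Fin d))
    (hg₀ : g₀ = (1 / (D.card : ℝ)) • (∑ i ∈ D, gradient (ℓ i) β₀)) :
    ‖βstar - (1 / 2 : ℝ) • (β₀ - lam⁻¹ • g₀)‖ ≤ (1 / 2) * ‖β₀ + lam⁻¹ • g₀‖ :=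
  ball_containment_of_minimizer_general D ℓ hdiff hconv lam hlam βstar β₀ hmin g₀ hg₀
end

section
/- (Theorem 1, ball containment form) Let β*_old and β*_new be the minimizers of the old and new L2-regularized empirical risks over training index sets D_old (size n_old) and D_new (size n_new), where D_new is obtained from D_old by adding instances indexed by A (size n_A) and removing instances indexed by R (size n_R). Let Δs = (1/(n_A+n_R)) (Σ_{i∈A} ∇ℓ_i(β*_old) − Σ_{i∈R} ∇ℓ_i(β*_old)). Then ‖β*_new − m‖ ≤ r, where m = ((n_old+n_new)/(2 n_new)) β*_old − (λ⁻¹ (n_A+n_R)/(2 n_new)) Δs and r = (1/2) ‖ ((n_A − n_R)/n_new) β*_old + λ⁻¹ ((n_A+n_R)/n_new) Δs ‖. -/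
/-!
Both minimizers are stationary: `∑_{i ∈ D} ∇ℓ_i(β) + |D| λ β = 0`. Let `p` solve the new
stationarity equation with the gradients frozen at `β*_old`, i.e.
`∑_{i ∈ D_new} ∇ℓ_i(β*_old) + n_new λ p = 0`; since the gradient sums over `D_new` and `D_old`
differ by the sums over `A` and `R`, `p` is explicit in `β*_old` and `Δs`. Monotonicity of the
gradient of a convex function gives `⟪β*_new - β*_old, β*_new - p⟫ ≤ 0`: the segment from
`β*_old` to `p` is seen from `β*_new` at an obtuse angle, so `β*_new` lies in the ball with this
diameter (Thales), whose centre is `m` and whose radius is `r`.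
-/

open InnerProductSpace RealInnerProductSpace Finset

section Convex

variable {E : Type*} [NormedAddCommGroup E] [NormedSpace ℝ E] {f : E → ℝ}

theorem ConvexOn.add_fderiv_sub_le (hf : ConvexOn ℝ Set.univ f) {x : E}
    (hfx : DifferentiableAt ℝ f x) (y : E) : f x + fderiv ℝ f x (y - x) ≤ f y := by
  let L : ℝ →ᵃ[ℝ] E := AffineMap.lineMap x y
  have hconv : ConvexOn ℝ Set.univ (f ∘ L) := by simpa using hf.comp_affineMap L
  have hderiv : HasDerivAt (f ∘ L) (fderiv ℝ f x (y - x)) 0 := by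
    have hfL : HasFDerivAt f (fderiv ℝ f x) (L 0) := by simpa [L] using hfx.hasFDerivAt
    exact hfL.comp_hasDerivAt 0 AffineMap.hasDerivAt_lineMap
  have := hconv.le_slope_of_hasDerivAt (Set.mem_univ 0) (Set.mem_univ 1) one_pos hderiv
  simpa [slope, L, le_sub_iff_add_le'] using this

end Convex

section InnerProductSpace

variable {E : Type*} [NormedAddCommGroup E] [InnerProductSpace ℝ E]

theorem norm_sub_midpoint_le_of_inner_nonpos_s6 {a b c : E} (h : ⟪a - b, a - c⟫ ≤ 0) :
    ‖a - midpoint ℝ b c‖ ≤ ‖b - c‖ / 2 := by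
  have hmid : a - midpoint ℝ b c = (1 / 2 : ℝ) • ((a - b) + (a - c)) := by
    rw [midpoint_eq_smul_add, invOf_eq_inv]
    module
  have hsq : ‖(a - b) + (a - c)‖ ^ 2 ≤ ‖b - c‖ ^ 2 := by
    rw [show b - c = (a - c) - (a - b) by abel, norm_add_sq_real (a - b),
      norm_sub_sq_real (a - c)]
    linarith [real_inner_comm (a - b) (a - c)]
  rw [hmid, norm_smul, Real.norm_of_nonneg (by norm_num)]
  linarith [(sq_le_sq₀ (norm_nonneg _) (norm_nonneg _)).mp hsq]

variable [CompleteSpace E]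

theorem ConvexOn.inner_gradient_sub_gradient_nonneg {f : E → ℝ} (hf : ConvexOn ℝ Set.univ f)
    {x y : E} (hfx : DifferentiableAt ℝ f x) (hfy : DifferentiableAt ℝ f y) :
    0 ≤ ⟪gradient f y - gradient f x, y - x⟫ := by
  have hxy := hf.add_fderiv_sub_le hfx y
  have hyx := hf.add_fderiv_sub_le hfy x
  rw [← neg_sub, map_neg] at hyx
  rw [inner_sub_left, inner_gradient_left, inner_gradient_left]
  linarith

theorem IsLocalMin.gradient_add_smul_eq_zero {g : E → ℝ} {lam : ℝ} {x : E}
    (hmin : IsLocalMin (fun β => g β + (lam / 2) * ‖β‖ ^ 2) x) (hg : DifferentiableAt ℝ g x) :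
    gradient g x + lam • x = 0 := by
  have hderiv : HasFDerivAt (fun β => g β + (lam / 2) * ‖β‖ ^ 2)
      (toDual ℝ E (gradient g x + lam • x)) x := by
    refine (hg.hasFDerivAt.fun_add
      ((hasStrictFDerivAt_norm_sq x).hasFDerivAt.const_mul (lam / 2))).congr_fderiv ?_
    ext v
    simp
    ring
  exact (toDual ℝ E).map_eq_zero_iff.mp (hmin.hasFDerivAt_eq_zero hderiv)

variable {ι : Type*} {S : Finset ι} {ℓ : ι → E → ℝ}

theorem sum_gradient_add_card_mul_smul_eq_zero {lam : ℝ} {x : E}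
    (hdiff : ∀ i ∈ S, DifferentiableAt ℝ (ℓ i) x)
    (hmin : ∀ β, (1 / (#S : ℝ)) * (∑ i ∈ S, ℓ i x) + (lam / 2) * ‖x‖ ^ 2 ≤
      (1 / (#S : ℝ)) * (∑ i ∈ S, ℓ i β) + (lam / 2) * ‖β‖ ^ 2) :
    ∑ i ∈ S, gradient (ℓ i) x + ((#S : ℝ) * lam) • x = 0 := by
  rcases S.eq_empty_or_nonempty with rfl | hS
  · simp
  have hsum : HasFDerivAt (fun β => (1 / (#S : ℝ)) * ∑ i ∈ S, ℓ i β)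
      (toDual ℝ E ((1 / (#S : ℝ)) • ∑ i ∈ S, gradient (ℓ i) x)) x := by
    refine ((HasFDerivAt.fun_sum fun i hi => (hdiff i hi).hasFDerivAt).const_mul _).congr_fderiv ?_
    ext v
    simp
  have hstat := IsLocalMin.gradient_add_smul_eq_zero (Filter.Eventually.of_forall hmin)
    hsum.differentiableAt
  rw [(hasGradientAt_iff_hasFDerivAt.mpr hsum).gradient] at hstat
  have hcard : (#S : ℝ) ≠ 0 := by positivity
  calc ∑ i ∈ S, gradient (ℓ i) x + ((#S : ℝ) * lam) • x
      = (#S : ℝ) • ((1 / (#S : ℝ)) • ∑ i ∈ S, gradient (ℓ i) x + lam • x) := by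
        rw [smul_add, smul_smul, smul_smul, mul_one_div_cancel hcard, one_smul]
    _ = 0 := by rw [hstat, smul_zero]

theorem inner_sum_gradient_sub_sum_gradient_nonneg (hdiff : ∀ i ∈ S, Differentiable ℝ (ℓ i))
    (hconv : ∀ i ∈ S, ConvexOn ℝ Set.univ (ℓ i)) (x y : E) :
    0 ≤ ⟪∑ i ∈ S, gradient (ℓ i) y - ∑ i ∈ S, gradient (ℓ i) x, y - x⟫ := by
  rw [← sum_sub_distrib, sum_inner]
  exact sum_nonneg fun i hi =>
    (hconv i hi).inner_gradient_sub_gradient_nonneg (hdiff i hi x) (hdiff i hi y)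

theorem norm_sub_midpoint_le_of_regularized_min (hdiff : ∀ i ∈ S, Differentiable ℝ (ℓ i))
    (hconv : ∀ i ∈ S, ConvexOn ℝ Set.univ (ℓ i)) {lam : ℝ} (hlam : 0 < lam) (hS : S.Nonempty)
    {x : E} (hmin : ∀ β, (1 / (#S : ℝ)) * (∑ i ∈ S, ℓ i x) + (lam / 2) * ‖x‖ ^ 2 ≤
      (1 / (#S : ℝ)) * (∑ i ∈ S, ℓ i β) + (lam / 2) * ‖β‖ ^ 2)
    {y p : E} (hp : ∑ i ∈ S, gradient (ℓ i) y + ((#S : ℝ) * lam) • p = 0) :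
    ‖x - midpoint ℝ y p‖ ≤ ‖y - p‖ / 2 := by
  apply norm_sub_midpoint_le_of_inner_nonpos_s6
  have hκ : 0 < (#S : ℝ) * lam := mul_pos (by simpa using hS.card_pos) hlam
  have hstat := sum_gradient_add_card_mul_smul_eq_zero (fun i hi => hdiff i hi x) hmin
  have hgap : ∑ i ∈ S, gradient (ℓ i) x - ∑ i ∈ S, gradient (ℓ i) y
      = -((#S : ℝ) * lam) • (x - p) := by
    rw [eq_neg_of_add_eq_zero_left hstat, eq_neg_of_add_eq_zero_left hp]
    module
  have hmono := inner_sum_gradient_sub_sum_gradient_nonneg hdiff hconv y x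
  rw [hgap, real_inner_smul_left, real_inner_comm] at hmono
  exact nonpos_of_mul_nonneg_right hmono (neg_neg_of_pos hκ)

end InnerProductSpace

theorem sum_sdiff_union_eq_add_sub {ι M : Type*} [DecidableEq ι] [AddCommGroup M]
    {D A R : Finset ι} (hR : R ⊆ D) (hA : Disjoint A (D \ R)) (f : ι → M) :
    ∑ i ∈ (D \ R) ∪ A, f i = ∑ i ∈ D, f i + (∑ i ∈ A, f i - ∑ i ∈ R, f i) := by
  rw [sum_union hA.symm, sum_sdiff_eq_sub hR]
  abel

theorem theorem1_ball_containment_general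
    {d : ℕ} {ι : Type*} [DecidableEq ι]
    (Dold Dnew A R : Finset ι)
    (ℓ : ι → EuclideanSpace ℝ (Fin d) → ℝ)
    (hdiff : ∀ i, Differentiable ℝ (ℓ i))
    (hconv : ∀ i, ConvexOn ℝ Set.univ (ℓ i))
    (lam : ℝ) (hlam : 0 < lam)
    (hR : R ⊆ Dold)
    (hDnew : Dnew = (Dold \ R) ∪ A)
    (hAdisj : Disjoint A (Dold \ R))
    (hnnew : 0 < Dnew.card) (hAR : 0 < A.card + R.card)
    (βold βnew : EuclideanSpace ℝ (Fin d))
    (hminold : ∀ β,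
      (1 / (Dold.card : ℝ)) * (∑ i ∈ Dold, ℓ i βold) + (lam / 2) * ‖βold‖ ^ 2 ≤
      (1 / (Dold.card : ℝ)) * (∑ i ∈ Dold, ℓ i β) + (lam / 2) * ‖β‖ ^ 2)
    (hminnew : ∀ β,
      (1 / (Dnew.card : ℝ)) * (∑ i ∈ Dnew, ℓ i βnew) + (lam / 2) * ‖βnew‖ ^ 2 ≤
      (1 / (Dnew.card : ℝ)) * (∑ i ∈ Dnew, ℓ i β) + (lam / 2) * ‖β‖ ^ 2)
    (Δs m : EuclideanSpace ℝ (Fin d)) (r : ℝ)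
    (hΔs : Δs = (1 / ((A.card : ℝ) + (R.card : ℝ))) •
        (∑ i ∈ A, gradient (ℓ i) βold - ∑ i ∈ R, gradient (ℓ i) βold))
    (hm : m = (((Dold.card : ℝ) + (Dnew.card : ℝ)) / (2 * (Dnew.card : ℝ))) • βold
        - (lam⁻¹ * ((A.card : ℝ) + (R.card : ℝ)) / (2 * (Dnew.card : ℝ))) • Δs)
    (hr : r = (1 / 2) * ‖(((A.card : ℝ) - (R.card : ℝ)) / (Dnew.card : ℝ)) • βold
        + (lam⁻¹ * ((A.card : ℝ) + (R.card : ℝ)) / (Dnew.card : ℝ)) • Δs‖) :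
    ‖βnew - m‖ ≤ r := by
  have hcard : (#Dnew : ℝ) = #Dold + #A - #R := by
    simpa [hDnew, add_sub_assoc] using sum_sdiff_union_eq_add_sub hR hAdisj fun _ => (1 : ℝ)
  have hold := sum_gradient_add_card_mul_smul_eq_zero (fun i _ => (hdiff i).differentiableAt)
    hminold
  have hshift : ∑ i ∈ Dnew, gradient (ℓ i) βold
      = -(((#Dold : ℝ) * lam) • βold) + ((#A : ℝ) + #R) • Δs := by
    rw [hDnew, sum_sdiff_union_eq_add_sub hR hAdisj, eq_neg_of_add_eq_zero_left hold, hΔs,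
      smul_smul, mul_one_div_cancel (by exact_mod_cast hAR.ne'), one_smul]
  set p := ((#Dold : ℝ) / #Dnew) • βold - (lam⁻¹ * (#A + #R) / #Dnew) • Δs
  have hDnew0 : (#Dnew : ℝ) ≠ 0 := by positivity
  have hp : ∑ i ∈ Dnew, gradient (ℓ i) βold + ((#Dnew : ℝ) * lam) • p = 0 := by
    rw [hshift]
    match_scalars <;> field_simp <;> ring
  have hm' : m = midpoint ℝ βold p := by
    rw [hm, midpoint_eq_smul_add, invOf_eq_inv]
    match_scalars
    · field_simp
      ring
    · field_simp
  have hr' : r = ‖βold - p‖ / 2 := by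
    rw [hr, mul_comm, ← div_eq_mul_one_div]
    congr 2
    match_scalars
    · field_simp
      linarith
    · field_simp
  rw [hm', hr']
  exact norm_sub_midpoint_le_of_regularized_min (fun i _ => hdiff i) (fun i _ => hconv i) hlam
    (card_pos.mp hnnew) hminnew hp

theorem theorem1_ball_containment
    {d : ℕ} {ι : Type*} [DecidableEq ι]
    (Dold Dnew A R : Finset ι)
    (ℓ : ι → EuclideanSpace ℝ (Fin d) → ℝ)
    (hdiff : ∀ i, Differentiable ℝ (ℓ i))
    (hconv : ∀ i, ConvexOn ℝ Set.univ (ℓ i))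
    (lam : ℝ) (hlam : 0 < lam)
    (hA : A ⊆ Dnew) (hR : R ⊆ Dold)
    (hDnew : Dnew = (Dold \ R) ∪ A)
    (hAdisj : Disjoint A (Dold \ R))
    (hnold : 0 < Dold.card) (hnnew : 0 < Dnew.card) (hAR : 0 < A.card + R.card)
    (βold βnew : EuclideanSpace ℝ (Fin d))
    (hminold : ∀ β,
      (1 / (Dold.card : ℝ)) * (∑ i ∈ Dold, ℓ i βold) + (lam / 2) * ‖βold‖ ^ 2 ≤
      (1 / (Dold.card : ℝ)) * (∑ i ∈ Dold, ℓ i β) + (lam / 2) * ‖β‖ ^ 2)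
    (hminnew : ∀ β,
      (1 / (Dnew.card : ℝ)) * (∑ i ∈ Dnew, ℓ i βnew) + (lam / 2) * ‖βnew‖ ^ 2 ≤
      (1 / (Dnew.card : ℝ)) * (∑ i ∈ Dnew, ℓ i β) + (lam / 2) * ‖β‖ ^ 2)
    (Δs m : EuclideanSpace ℝ (Fin d)) (r : ℝ)
    (hΔs : Δs = (1 / ((A.card : ℝ) + (R.card : ℝ))) •
        (∑ i ∈ A, gradient (ℓ i) βold - ∑ i ∈ R, gradient (ℓ i) βold))
    (hm : m = (((Dold.card : ℝ) + (Dnew.card : ℝ)) / (2 * (Dnew.card : ℝ))) • βold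
        - (lam⁻¹ * ((A.card : ℝ) + (R.card : ℝ)) / (2 * (Dnew.card : ℝ))) • Δs)
    (hr : r = (1 / 2) * ‖(((A.card : ℝ) - (R.card : ℝ)) / (Dnew.card : ℝ)) • βold
        + (lam⁻¹ * ((A.card : ℝ) + (R.card : ℝ)) / (Dnew.card : ℝ)) • Δs‖) :
    ‖βnew - m‖ ≤ r :=
  theorem1_ball_containment_general Dold Dnew A R ℓ hdiff hconv lam hlam hR hDnew hAdisj hnnew hAR
    βold βnew hminold hminnew Δs m r hΔs hm hr
end
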